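/- arXiv:math/0611912 — 5 statements merged into one kernel-verified Lean document; each statement's English description precedes it below -/
import Mathlib

section
/- Let (X, d, h, i, p) be contraction data onto H and let δ : X → X be a perturbation of d (i.e. D := d + δ satisfies D ∘ D = 0), such that (h ∘ δ)^N = 0 for some natural number N. Set S := Σ_{k=0}^{N−1} (−1)^k (h ∘ δ)^k and Σ := δ ∘ S. Then d ∘ Σ + Σ ∘ d + Σ ∘ (i ∘ p) ∘ Σ = 0. -/
/-- For contraction data `(X, d, h, i, p)` onto `H` and a
perturbation `δ` of `d` with `(h ∘ δ)^N = 0`, setting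
`S := Σ_{k<N} (−1)^k (h ∘ δ)^k` and `T := δ ∘ S`, one has
`d ∘ T + T ∘ d + T ∘ (i ∘ p) ∘ T = 0`. -/
theorem perturbation_identity {K X H : Type*} [Field K]
    [AddCommGroup X] [Module K X] [AddCommGroup H] [Module K H]
    (d h δ : X →ₗ[K] X) (i : H →ₗ[K] X) (p : X →ₗ[K] H) (N : ℕ)
    (hd2 : d ∘ₗ d = 0)
    (hdi : d ∘ₗ i = 0) (hpd : p ∘ₗ d = 0)
    (hpi : p ∘ₗ i = LinearMap.id)
    (hhom : LinearMap.id - i ∘ₗ p = d ∘ₗ h + h ∘ₗ d)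
    (hh2 : h ∘ₗ h = 0) (hhi : h ∘ₗ i = 0) (hph : p ∘ₗ h = 0)
    (hD2 : (d + δ) ∘ₗ (d + δ) = 0)
    (hnil : (h ∘ₗ δ) ^ N = 0)
    (S : X →ₗ[K] X)
    (hS : S = ∑ k ∈ Finset.range N, ((-1 : K) ^ k) • (h ∘ₗ δ) ^ k)
    (T : X →ₗ[K] X) (hT : T = δ ∘ₗ S) :
    d ∘ₗ T + T ∘ₗ d + T ∘ₗ (i ∘ₗ p) ∘ₗ T = 0 := by
  -- Work in the endomorphism ring: `∘ₗ` of endomorphisms is `*`.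
  have hcomp : ∀ f g : X →ₗ[K] X, f ∘ₗ g = f * g := fun _ _ => rfl
  -- express `S` as a geometric series in `-(h*δ)`
  have hS' : S = ∑ k ∈ Finset.range N, (-(h * δ)) ^ k := by
    rw [hS]
    refine Finset.sum_congr rfl fun k _ => ?_
    rw [hcomp, ← smul_pow, neg_one_smul]
  have hnil' : (h * δ) ^ N = 0 := by rw [← hcomp]; exact hnil
  -- `S * (h*δ) = 1 - S`
  have hv : S * (h * δ) = 1 - S := by
    have hg := geom_sum_mul (-(h * δ)) N
    rw [← hS'] at hg
    have hxn : (-(h * δ)) ^ N = 0 := by rw [neg_pow, hnil', mul_zero]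
    rw [hxn] at hg
    have h2 : -(S * (h * δ)) - S = -1 := by
      calc -(S * (h * δ)) - S = S * (-(h * δ) - 1) := by noncomm_ring
        _ = 0 - 1 := hg
        _ = -1 := by abel
    calc S * (h * δ) = -(-(S * (h * δ)) - S) - S := by abel
      _ = -(-1) - S := by rw [h2]
      _ = 1 - S := by abel
  -- `h*δ` commutes with `S`
  have hcm : (h * δ) * S = S * (h * δ) := by
    rw [hS', Finset.mul_sum, Finset.sum_mul]
    exact Finset.sum_congr rfl fun k _ => (((Commute.refl (h * δ)).neg_right).pow_right k).eq
  have hu : (h * δ) * S = 1 - S := hcm.trans hv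
  -- `d*δ + δ*δ + δ*d = 0`
  have hw : d * δ + δ * δ + δ * d = 0 := by
    have e1 : (d + δ) * (d + δ) = 0 := by rw [← hcomp]; exact hD2
    have e2 : d * d = 0 := by rw [← hcomp]; exact hd2
    calc d * δ + δ * δ + δ * d = (d + δ) * (d + δ) - d * d := by noncomm_ring
      _ = 0 := by rw [e1, e2]; abel
  -- rewrite `i ∘ₗ p`
  have hip : i ∘ₗ p = 1 - (d * h + h * d) := by
    have e := hhom
    rw [hcomp, hcomp] at e
    rw [show (1 : X →ₗ[K] X) = LinearMap.id from rfl, ← e]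
    abel
  -- main computation
  rw [hT, hip, hcomp δ S]
  rw [hcomp, hcomp, hcomp, hcomp]
  calc d * (δ * S) + δ * S * d + δ * S * ((1 - (d * h + h * d)) * (δ * S))
      = (d * δ + δ * δ + δ * d) * S
        - δ * S * d * ((h * δ) * S - (1 - S))
        - δ * S * h * ((d * δ + δ * δ + δ * d) * S)
        + δ * (S * (h * δ) - (1 - S)) * (δ * S)
        + δ * (S * (h * δ) - (1 - S)) * (d * S) := by noncomm_ring
    _ = 0 := by rw [hu, hv, hw]; noncomm_ring
end

section
/- Let (X, d, h, i, p) be contraction data onto H and let δ : X → X be a perturbation of d (i.e. D := d + δ satisfies D ∘ D = 0), such that (h ∘ δ)^N = 0 for some natural number N. Set S := Σ_{k=0}^{N−1} (−1)^k (h ∘ δ)^k and Σ := δ ∘ S. Then d ∘ Σ ∘ i = − Σ ∘ (i ∘ p) ∘ Σ ∘ i. -/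
/-!
Write `T = δ S`, where `S` inverts `1 + h δ`. In the endomorphism ring the identity is the
restriction to `i` of the ring identity `d T + T d = -(T (i p) T)` (recall `d i = 0`). Multiplied
on the left by `1 + δ h`, which turns `T` into `δ`, that identity follows from `D² = 0` and the
homotopy relation; and `1 + δ h` is a unit because `δ h` is nilpotent along with `h δ`.
-/

open Finset

section Ring

variable {R : Type*} [Ring R]

theorem IsNilpotent.mul_comm {a b : R} (h : IsNilpotent (a * b)) : IsNilpotent (b * a) := by
  obtain ⟨n, hn⟩ := h
  refine ⟨n + 1, ?_⟩
  rw [pow_succ', mul_assoc, ← mul_pow_mul, hn, zero_mul, mul_zero]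

theorem one_add_mul_geom_sum_neg_of_pow_eq_zero {a : R} {N : ℕ} (ha : a ^ N = 0) :
    (1 + a) * ∑ k ∈ range N, (-a) ^ k = 1 := by
  have h := mul_neg_geom_sum (-a) N
  rwa [sub_neg_eq_add, neg_pow, ha, mul_zero, sub_zero] at h

theorem mul_add_mul_eq_neg_of_perturbation {d h δ e S : R}
    (hd2 : d * d = 0) (hhom : 1 - e = d * h + h * d) (hD2 : (d + δ) * (d + δ) = 0)
    (hS : (1 + h * δ) * S = 1) (hu : IsUnit (1 + δ * h)) :
    d * (δ * S) + δ * S * d = -(δ * S * e * (δ * S)) := by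
  have hT : (1 + δ * h) * (δ * S) = δ :=
    calc (1 + δ * h) * (δ * S) = δ * ((1 + h * δ) * S) := by noncomm_ring
      _ = δ := by rw [hS, mul_one]
  -- the difference of the two sides is a combination of the hypotheses
  have hkey : (1 + δ * h) * (d * (δ * S)) = -(δ * d) - δ * e * (δ * S) :=
    calc (1 + δ * h) * (d * (δ * S))
        = ((d + δ) * (d + δ) - d * d) * S - δ * d * ((1 + h * δ) * S - 1)
          + δ * (d * h + h * d - (1 - e)) * (δ * S) - δ * d - δ * e * (δ * S) := by
          noncomm_ring
      _ = -(δ * d) - δ * e * (δ * S) := by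
          rw [hD2, hd2, hS, hhom]
          noncomm_ring
  refine hu.mul_left_cancel ?_
  calc (1 + δ * h) * (d * (δ * S) + δ * S * d)
      = (1 + δ * h) * (d * (δ * S)) + (1 + δ * h) * (δ * S) * d := by noncomm_ring
    _ = -((1 + δ * h) * (δ * S) * e * (δ * S)) := by
        rw [hkey, hT]
        noncomm_ring
    _ = (1 + δ * h) * -(δ * S * e * (δ * S)) := by noncomm_ring

end Ring

theorem perturbation_identity_base_general {K X H : Type*} [Field K]
    [AddCommGroup X] [Module K X] [AddCommGroup H] [Module K H]
    (d h δ : X →ₗ[K] X) (i : H →ₗ[K] X) (p : X →ₗ[K] H) (N : ℕ)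
    (hd2 : d ∘ₗ d = 0)
    (hdi : d ∘ₗ i = 0)
    (hhom : LinearMap.id - i ∘ₗ p = d ∘ₗ h + h ∘ₗ d)
    (hD2 : (d + δ) ∘ₗ (d + δ) = 0)
    (hnil : (h ∘ₗ δ) ^ N = 0)
    (S : X →ₗ[K] X)
    (hS : S = ∑ k ∈ Finset.range N, ((-1 : K) ^ k) • (h ∘ₗ δ) ^ k)
    (T : X →ₗ[K] X) (hT : T = δ ∘ₗ S) :
    d ∘ₗ T ∘ₗ i = -(T ∘ₗ (i ∘ₗ p) ∘ₗ T ∘ₗ i) := by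
  have hS_geom : S = ∑ k ∈ range N, (-(h * δ)) ^ k := by
    simp only [hS, ← neg_one_smul K (h * δ), smul_pow]
    rfl
  have hS_inv : (1 + h * δ) * S = 1 := hS_geom ▸ one_add_mul_geom_sum_neg_of_pow_eq_zero hnil
  have hu : IsUnit (1 + δ * h) := (IsNilpotent.mul_comm ⟨N, hnil⟩).isUnit_one_add
  have hring := mul_add_mul_eq_neg_of_perturbation (e := i ∘ₗ p) hd2 hhom hD2 hS_inv hu
  rw [show δ * S = T from hT.symm] at hring
  calc d ∘ₗ T ∘ₗ i = (d * T + T * d) ∘ₗ i := by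
        simp only [LinearMap.add_comp, Module.End.mul_eq_comp, LinearMap.comp_assoc, hdi,
          LinearMap.comp_zero, add_zero]
    _ = -(T ∘ₗ (i ∘ₗ p) ∘ₗ T ∘ₗ i) := by
        rw [hring]
        simp only [LinearMap.neg_comp, Module.End.mul_eq_comp, LinearMap.comp_assoc]

/-- For contraction data `(X, d, h, i, p)` onto `H` and a
perturbation `δ` of `d` with `(h ∘ δ)^N = 0`, setting
`S := Σ_{k<N} (−1)^k (h ∘ δ)^k` and `T := δ ∘ S`, one has
`d ∘ T ∘ i = − T ∘ (i ∘ p) ∘ T ∘ i`. -/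
theorem perturbation_identity_base {K X H : Type*} [Field K]
    [AddCommGroup X] [Module K X] [AddCommGroup H] [Module K H]
    (d h δ : X →ₗ[K] X) (i : H →ₗ[K] X) (p : X →ₗ[K] H) (N : ℕ)
    (hd2 : d ∘ₗ d = 0)
    (hdi : d ∘ₗ i = 0) (hpd : p ∘ₗ d = 0)
    (hpi : p ∘ₗ i = LinearMap.id)
    (hhom : LinearMap.id - i ∘ₗ p = d ∘ₗ h + h ∘ₗ d)
    (hh2 : h ∘ₗ h = 0) (hhi : h ∘ₗ i = 0) (hph : p ∘ₗ h = 0)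
    (hD2 : (d + δ) ∘ₗ (d + δ) = 0)
    (hnil : (h ∘ₗ δ) ^ N = 0)
    (S : X →ₗ[K] X)
    (hS : S = ∑ k ∈ Finset.range N, ((-1 : K) ^ k) • (h ∘ₗ δ) ^ k)
    (T : X →ₗ[K] X) (hT : T = δ ∘ₗ S) :
    d ∘ₗ T ∘ₗ i = -(T ∘ₗ (i ∘ₗ p) ∘ₗ T ∘ₗ i) :=
  perturbation_identity_base_general d h δ i p N hd2 hdi hhom hD2 hnil S hS T hT
end

section
/- Let (X, d, h, i, p) be contraction data onto H and let δ : X → X be a perturbation of d (i.e. D := d + δ satisfies D ∘ D = 0), such that (h ∘ δ)^N = 0 for some natural number N. Set S := Σ_{k=0}^{N−1} (−1)^k (h ∘ δ)^k and define the transferred operator 𝒟 := p ∘ δ ∘ S ∘ i : H → H. Then 𝒟 ∘ 𝒟 = 0, i.e. 𝒟 is a differential on H. -/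
/-- For contraction data `(X, d, h, i, p)` onto `H` and a
perturbation `δ` of `d` with `(h ∘ δ)^N = 0`, the transferred operator
`𝒟 := p ∘ δ ∘ S ∘ i` with `S := Σ_{k<N} (−1)^k (h ∘ δ)^k` squares to zero. -/
theorem transferred_differential_squares_to_zero {K X H : Type*} [Field K]
    [AddCommGroup X] [Module K X] [AddCommGroup H] [Module K H]
    (d h δ : X →ₗ[K] X) (i : H →ₗ[K] X) (p : X →ₗ[K] H) (N : ℕ)
    (hd2 : d ∘ₗ d = 0)
    (hdi : d ∘ₗ i = 0) (hpd : p ∘ₗ d = 0)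
    (hpi : p ∘ₗ i = LinearMap.id)
    (hhom : LinearMap.id - i ∘ₗ p = d ∘ₗ h + h ∘ₗ d)
    (hh2 : h ∘ₗ h = 0) (hhi : h ∘ₗ i = 0) (hph : p ∘ₗ h = 0)
    (hD2 : (d + δ) ∘ₗ (d + δ) = 0)
    (hnil : (h ∘ₗ δ) ^ N = 0)
    (S : X →ₗ[K] X)
    (hS : S = ∑ k ∈ Finset.range N, ((-1 : K) ^ k) • (h ∘ₗ δ) ^ k)
    (𝒟 : H →ₗ[K] H) (h𝒟 : 𝒟 = p ∘ₗ δ ∘ₗ S ∘ₗ i) :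
    𝒟 ∘ₗ 𝒟 = 0 := by
  -- Work in the endomorphism ring; `*` is composition.
  have hpi' : ∀ y, p (i y) = y := fun y => by
    simpa using LinearMap.congr_fun hpi y
  -- S as a geometric series of -(h*δ)
  have hSform : S = ∑ k ∈ Finset.range N, (-(h * δ)) ^ k := by
    rw [hS]
    refine Finset.sum_congr rfl fun k _ => ?_
    rw [← neg_one_smul K (h * δ), smul_pow]
    rfl
  have hAS : S * (h * δ) = 1 - S := by
    have geom := geom_sum_mul (-(h * δ)) N
    rw [← hSform] at geom
    have hz : (-(h * δ)) ^ N = 0 := by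
      rw [neg_pow, (by rfl : (h*δ)^N = (h ∘ₗ δ)^N), hnil, mul_zero]
    rw [hz] at geom
    have h2 : S * (h * δ) - (1 - S) = 0 := by
      rw [show S * (h * δ) - (1 - S) = -(S * (-(h * δ) - 1)) - 1 by noncomm_ring, geom]
      noncomm_ring
    exact sub_eq_zero.mp h2
  have hcommAS : (h * δ) * S = S * (h * δ) := by
    rw [hSform, Finset.mul_sum, Finset.sum_mul]
    exact Finset.sum_congr rfl fun k _ => (((Commute.refl (h*δ)).neg_right).pow_right k).eq
  have hSA : (h * δ) * S = 1 - S := by rw [hcommAS, hAS]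
  -- basic ring facts
  have f5 : i ∘ₗ p = 1 - d * h - h * d := by
    have h1 : (1 : X →ₗ[K] X) - i ∘ₗ p = d * h + h * d := hhom
    rw [sub_sub, ← h1, sub_sub_cancel]
  have fdπ : d * (i ∘ₗ p) = 0 := by
    ext x
    simpa using LinearMap.congr_fun hdi (p x)
  have fπd : (i ∘ₗ p) * d = 0 := by
    ext x
    simpa using congrArg i (LinearMap.congr_fun hpd x)
  have fdδ : d * δ = -(δ * d) - δ * δ := by
    have hD2' : (d + δ) * (d + δ) = 0 := hD2
    have hd2' : d * d = 0 := hd2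
    have h1 : d * d + (d * δ + (δ * d + δ * δ)) = 0 := by rw [← hD2']; noncomm_ring
    rw [hd2', zero_add] at h1
    rw [eq_neg_of_add_eq_zero_left h1]
    noncomm_ring
  have fδD : δ * d + δ * δ = -(d * δ) := by rw [fdδ]; noncomm_ring
  -- the chain identity
  have chain : S * ((i ∘ₗ p) * (δ * (S * (i ∘ₗ p)))) = (d + δ) * (S * (i ∘ₗ p)) := by
    calc S * ((i ∘ₗ p) * (δ * (S * (i ∘ₗ p))))
        = S * ((1 - d * h - h * d) * (δ * (S * (1 - d * h - h * d)))) := by rw [f5]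
      _ = S * (δ * (S * (i ∘ₗ p))) - S * (d * ((h * δ) * S * (i ∘ₗ p)))
            - S * (h * ((d * δ) * (S * (i ∘ₗ p)))) := by rw [f5]; noncomm_ring
      _ = S * (δ * (S * (i ∘ₗ p))) - S * (d * ((1 - S) * (i ∘ₗ p)))
            - S * (h * ((d * δ) * (S * (i ∘ₗ p)))) := by rw [hSA]
      _ = S * (δ * (S * (i ∘ₗ p))) - S * (d * ((1 - S) * (i ∘ₗ p)))
            - S * (h * ((-(δ * d) - δ * δ) * (S * (i ∘ₗ p)))) := by rw [fdδ]
      _ = S * (δ * (S * (i ∘ₗ p))) - S * (d * ((1 - S) * (i ∘ₗ p)))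
            + (S * (h * δ)) * (d * (S * (i ∘ₗ p)))
            + (S * (h * δ)) * (δ * (S * (i ∘ₗ p))) := by noncomm_ring
      _ = S * (δ * (S * (i ∘ₗ p))) - S * (d * ((1 - S) * (i ∘ₗ p)))
            + (1 - S) * (d * (S * (i ∘ₗ p)))
            + (1 - S) * (δ * (S * (i ∘ₗ p))) := by rw [hAS]
      _ = (d + δ) * (S * (i ∘ₗ p)) - S * (d * (i ∘ₗ p)) := by
            noncomm_ring
      _ = (d + δ) * (S * (i ∘ₗ p)) := by rw [fdπ]; noncomm_ring
  -- squaring kills everything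
  have e2 : (i ∘ₗ p) * (δ * (S * ((i ∘ₗ p) * (δ * (S * (i ∘ₗ p)))))) = 0 := by
    calc (i ∘ₗ p) * (δ * (S * ((i ∘ₗ p) * (δ * (S * (i ∘ₗ p))))))
        = (i ∘ₗ p) * (δ * ((d + δ) * (S * (i ∘ₗ p)))) := by rw [chain]
      _ = (i ∘ₗ p) * ((δ * d + δ * δ) * (S * (i ∘ₗ p))) := by noncomm_ring
      _ = (i ∘ₗ p) * ((-(d * δ)) * (S * (i ∘ₗ p))) := by rw [fδD]
      _ = -(((i ∘ₗ p) * d) * (δ * (S * (i ∘ₗ p)))) := by noncomm_ring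
      _ = 0 := by rw [fπd]; noncomm_ring
  -- transfer back to H
  rw [h𝒟]
  ext x
  have key := LinearMap.congr_fun e2 (i x)
  simp only [Module.End.mul_apply, LinearMap.comp_apply, LinearMap.zero_apply, hpi'] at key
  have key2 := congrArg p key
  simp only [hpi', map_zero] at key2
  simpa using key2
end

section
/- Let (X, d, h, i, p) be contraction data onto H and let δ : X → X be a perturbation of d (i.e. D := d + δ satisfies D ∘ D = 0), such that (h ∘ δ)^N = 0 for some natural number N. Set S := Σ_{k=0}^{N−1} (−1)^k (h ∘ δ)^k, 𝒟 := p ∘ δ ∘ S ∘ i : H → H, and ĩ := S ∘ i : H → X. Then D ∘ ĩ = ĩ ∘ 𝒟, i.e. ĩ is a chain map from (H, 𝒟) to (X, D). -/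
/-- For contraction data `(X, d, h, i, p)` onto `H` and a
perturbation `δ` of `d` with `(h ∘ δ)^N = 0`, the perturbed inclusion
`ĩ := S ∘ i` is a chain map from `(H, 𝒟)` to `(X, D)`, where
`S := Σ_{k<N} (−1)^k (h ∘ δ)^k`, `𝒟 := p ∘ δ ∘ S ∘ i` and `D := d + δ`. -/
theorem perturbed_inclusion_chain_map {K X H : Type*} [Field K]
    [AddCommGroup X] [Module K X] [AddCommGroup H] [Module K H]
    (d h δ : X →ₗ[K] X) (i : H →ₗ[K] X) (p : X →ₗ[K] H) (N : ℕ)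
    (hd2 : d ∘ₗ d = 0)
    (hdi : d ∘ₗ i = 0) (hpd : p ∘ₗ d = 0)
    (hpi : p ∘ₗ i = LinearMap.id)
    (hhom : LinearMap.id - i ∘ₗ p = d ∘ₗ h + h ∘ₗ d)
    (hh2 : h ∘ₗ h = 0) (hhi : h ∘ₗ i = 0) (hph : p ∘ₗ h = 0)
    (hD2 : (d + δ) ∘ₗ (d + δ) = 0)
    (hnil : (h ∘ₗ δ) ^ N = 0)
    (S : X →ₗ[K] X)
    (hS : S = ∑ k ∈ Finset.range N, ((-1 : K) ^ k) • (h ∘ₗ δ) ^ k)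
    (𝒟 : H →ₗ[K] H) (h𝒟 : 𝒟 = p ∘ₗ δ ∘ₗ S ∘ₗ i)
    (itilde : H →ₗ[K] X) (hitilde : itilde = S ∘ₗ i) :
    (d + δ) ∘ₗ itilde = itilde ∘ₗ 𝒟 := by
  simp only [← Module.End.mul_eq_comp, ← Module.End.one_eq_id] at hd2 hhom hh2 hD2 hnil hS
  -- S is the geometric series of x := -(h*δ)
  have hSgeom : S = ∑ k ∈ Finset.range N, (-(h * δ)) ^ k := by
    rw [hS]
    refine Finset.sum_congr rfl fun k _ => ?_
    rw [← smul_pow, neg_one_smul]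
  have hxN : (-(h * δ)) ^ N = 0 := by
    rw [neg_pow, hnil, mul_zero]
  -- (1 + h*δ) * S = 1
  have hcomm : (-(h * δ)) * S = S * (-(h * δ)) := by
    rw [hSgeom, Finset.mul_sum, Finset.sum_mul]
    refine Finset.sum_congr rfl fun k _ => ?_
    rw [← pow_succ, ← pow_succ']
  have hS1 : (1 + h * δ) * S = 1 := by
    have h1 : ((-(h * δ)) - 1) * S = (-(h * δ)) ^ N - 1 := by
      rw [hSgeom, mul_geom_sum]
    rw [hxN] at h1
    have : (1 + h * δ) * S = -(((-(h * δ)) - 1) * S) := by noncomm_ring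
    rw [this, h1]
    noncomm_ring
  -- S = 1 - (h*δ) * S
  have hS1' : S = 1 - (h * δ) * S := by
    have : S + (h * δ) * S = 1 := by
      calc S + (h * δ) * S = (1 + h * δ) * S := by noncomm_ring
        _ = 1 := hS1
    calc S = (S + (h * δ) * S) - (h * δ) * S := by noncomm_ring
      _ = 1 - (h * δ) * S := by rw [this]
  have hSsub : S - 1 = -((h * δ) * S) := by
    nth_rewrite 1 [hS1']
    noncomm_ring
  set Q : X →ₗ[K] X := i ∘ₗ p with hQ
  have hdh : d * h = 1 - Q - h * d := by
    have := hhom.symm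
    calc d * h = (d * h + h * d) - h * d := by noncomm_ring
      _ = (1 - Q) - h * d := by rw [this]
  have hdd : d * δ = -(δ * d) - δ * δ := by
    have hexp : d * d + (d * δ + (δ * d + δ * δ)) = 0 := by
      calc d * d + (d * δ + (δ * d + δ * δ)) = (d + δ) * (d + δ) := by noncomm_ring
        _ = 0 := hD2
    rw [hd2, zero_add] at hexp
    calc d * δ = (d * δ + (δ * d + δ * δ)) - (δ * d + δ * δ) := by noncomm_ring
      _ = 0 - (δ * d + δ * δ) := by rw [hexp]
      _ = -(δ * d) - δ * δ := by noncomm_ring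
  have eq_dS : d * S = d - δ * S + Q * (δ * S) + h * (d * (δ * S)) := by
    calc d * S = d * (1 - (h * δ) * S) := by rw [← hS1']
      _ = d - (d * h) * (δ * S) := by noncomm_ring
      _ = d - (1 - Q - h * d) * (δ * S) := by rw [hdh]
      _ = d - δ * S + Q * (δ * S) + h * (d * (δ * S)) := by noncomm_ring
  have eq_ddS : d * (δ * S) = -(δ * d) - δ * (Q * (δ * S)) - δ * (h * (d * (δ * S))) := by
    calc d * (δ * S) = (d * δ) * S := by noncomm_ring
      _ = (-(δ * d) - δ * δ) * S := by rw [hdd]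
      _ = -(δ * (d * S)) - δ * δ * S := by noncomm_ring
      _ = -(δ * (d - δ * S + Q * (δ * S) + h * (d * (δ * S)))) - δ * δ * S := by rw [eq_dS]
      _ = -(δ * d) - δ * (Q * (δ * S)) - δ * (h * (d * (δ * S))) := by noncomm_ring
  set T : X →ₗ[K] X := δ * S * (Q * (δ * S)) + d * (δ * S) with hT
  have eq_T : T = -(δ * (h * T)) - δ * d := by
    rw [hT]
    calc δ * S * (Q * (δ * S)) + d * (δ * S)
        = δ * S * (Q * (δ * S)) + (-(δ * d) - δ * (Q * (δ * S)) - δ * (h * (d * (δ * S)))) := by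
          nth_rewrite 1 [eq_ddS]
          rfl
      _ = δ * (S - 1) * (Q * (δ * S)) - δ * d - δ * (h * (d * (δ * S))) := by noncomm_ring
      _ = δ * (-((h * δ) * S)) * (Q * (δ * S)) - δ * d - δ * (h * (d * (δ * S))) := by rw [hSsub]
      _ = -(δ * (h * (δ * S * (Q * (δ * S)) + d * (δ * S)))) - δ * d := by noncomm_ring
  -- u := h ∘ (T ∘ i) satisfies u = -(h*δ) ∘ u
  have eq_u : h ∘ₗ (T ∘ₗ i) = -((h * δ) ∘ₗ (h ∘ₗ (T ∘ₗ i))) := by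
    nth_rewrite 1 [eq_T]
    simp only [Module.End.mul_eq_comp, LinearMap.sub_comp, LinearMap.neg_comp,
      LinearMap.comp_assoc, hdi, LinearMap.comp_zero, sub_zero, LinearMap.comp_neg,
      LinearMap.comp_sub]
  have hmulc : ∀ (f g : X →ₗ[K] X) (y : H →ₗ[K] X), (f * g) ∘ₗ y = f ∘ₗ (g ∘ₗ y) := by
    intro f g y
    rw [Module.End.mul_eq_comp, LinearMap.comp_assoc]
  have key : ∀ k : ℕ, h ∘ₗ (T ∘ₗ i) = ((-(h * δ)) ^ k) ∘ₗ (h ∘ₗ (T ∘ₗ i)) := by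
    intro k
    induction k with
    | zero => rw [pow_zero, Module.End.one_eq_id, LinearMap.id_comp]
    | succ n ih =>
      calc h ∘ₗ (T ∘ₗ i) = -((h * δ) ∘ₗ (h ∘ₗ (T ∘ₗ i))) := eq_u
        _ = (-(h * δ)) ∘ₗ (h ∘ₗ (T ∘ₗ i)) := by rw [LinearMap.neg_comp]
        _ = (-(h * δ)) ∘ₗ (((-(h * δ)) ^ n) ∘ₗ (h ∘ₗ (T ∘ₗ i))) := by rw [← ih]
        _ = ((-(h * δ)) ^ (n + 1)) ∘ₗ (h ∘ₗ (T ∘ₗ i)) := by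
            rw [pow_succ', hmulc]
  have u0 : h ∘ₗ (T ∘ₗ i) = 0 := by
    have := key N
    rwa [hxN, LinearMap.zero_comp] at this
  -- main End identity
  have e2 : S * (Q * (δ * S)) + h * T = Q * (δ * S) + h * (d * (δ * S)) := by
    rw [hT]
    calc S * (Q * (δ * S)) + h * (δ * S * (Q * (δ * S)) + d * (δ * S))
        = ((1 + h * δ) * S) * (Q * (δ * S)) + h * (d * (δ * S)) := by noncomm_ring
      _ = Q * (δ * S) + h * (d * (δ * S)) := by rw [hS1, one_mul]
  have main : (d + δ) * S = d + (S * (Q * (δ * S)) + h * T) := by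
    rw [e2]
    calc (d + δ) * S = d * S + δ * S := by noncomm_ring
      _ = (d - δ * S + Q * (δ * S) + h * (d * (δ * S))) + δ * S := by rw [eq_dS]
      _ = d + (Q * (δ * S) + h * (d * (δ * S))) := by noncomm_ring
  rw [hitilde, h𝒟]
  calc (d + δ) ∘ₗ (S ∘ₗ i) = ((d + δ) * S) ∘ₗ i := by
        rw [Module.End.mul_eq_comp, LinearMap.comp_assoc]
    _ = (d + (S * (Q * (δ * S)) + h * T)) ∘ₗ i := by rw [main]
    _ = d ∘ₗ i + ((S * (Q * (δ * S))) ∘ₗ i + (h * T) ∘ₗ i) := by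
        rw [LinearMap.add_comp, LinearMap.add_comp]
    _ = (S * (Q * (δ * S))) ∘ₗ i := by
        rw [hdi, Module.End.mul_eq_comp (h) T, LinearMap.comp_assoc, u0, zero_add, add_zero]
    _ = (S ∘ₗ i) ∘ₗ (p ∘ₗ δ ∘ₗ S ∘ₗ i) := by
        simp only [hQ, Module.End.mul_eq_comp, LinearMap.comp_assoc]
end

section
/- Let (X, d, h, i, p) be contraction data onto H, and let X = F_0 ⊇ F_1 ⊇ ⋯ ⊇ F_N = {0} be a decreasing chain of linear subspaces such that d(F_k) ⊆ F_k and h(F_k) ⊆ F_k for all k. Let D : X → X be a linear map with D ∘ D = 0 and (D − d)(F_k) ⊆ F_{k+1} for all k. Set δ := D − d, S := Σ_{k=0}^{N−1} (−1)^k (h ∘ δ)^k (a finite sum, since (h ∘ δ)^N = 0), 𝒟 := p ∘ δ ∘ S ∘ i : H → H, and ĩ := S ∘ i : H → X. Then 𝒟 ∘ 𝒟 = 0 and D ∘ ĩ = ĩ ∘ 𝒟; thus H carries an induced differential and ĩ is a chain map from (H, 𝒟) to (X, D). -/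
/-- Transfer of differential complexes along contraction data
with a finite compatible filtration: if `d` and `h` preserve the filtration
`X = F 0 ⊇ F 1 ⊇ ⋯ ⊇ F N = {0}` while `D − d` raises it, and `D ∘ D = 0`,
then with `δ := D − d`, `S := Σ_{k<N} (−1)^k (h ∘ δ)^k`,
`𝒟 := p ∘ δ ∘ S ∘ i` and `ĩ := S ∘ i`, one has `𝒟 ∘ 𝒟 = 0` and
`D ∘ ĩ = ĩ ∘ 𝒟`. -/
theorem transfer_of_differential_complexes {K X H : Type*} [Field K]
    [AddCommGroup X] [Module K X] [AddCommGroup H] [Module K H]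
    (d h : X →ₗ[K] X) (i : H →ₗ[K] X) (p : X →ₗ[K] H) (N : ℕ)
    (hd2 : d ∘ₗ d = 0)
    (hdi : d ∘ₗ i = 0) (hpd : p ∘ₗ d = 0)
    (hpi : p ∘ₗ i = LinearMap.id)
    (hhom : LinearMap.id - i ∘ₗ p = d ∘ₗ h + h ∘ₗ d)
    (hh2 : h ∘ₗ h = 0) (hhi : h ∘ₗ i = 0) (hph : p ∘ₗ h = 0)
    (F : ℕ → Submodule K X)
    (hF0 : F 0 = ⊤) (hFN : F N = ⊥)
    (hdec : ∀ k, F (k + 1) ≤ F k)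
    (hdF : ∀ k, ∀ x ∈ F k, d x ∈ F k)
    (hhF : ∀ k, ∀ x ∈ F k, h x ∈ F k)
    (D : X →ₗ[K] X) (hD2 : D ∘ₗ D = 0)
    (hDF : ∀ k, ∀ x ∈ F k, (D - d) x ∈ F (k + 1))
    (δ : X →ₗ[K] X) (hδ : δ = D - d)
    (S : X →ₗ[K] X)
    (hS : S = ∑ k ∈ Finset.range N, ((-1 : K) ^ k) • (h ∘ₗ δ) ^ k)
    (𝒟 : H →ₗ[K] H) (h𝒟 : 𝒟 = p ∘ₗ δ ∘ₗ S ∘ₗ i)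
    (itilde : H →ₗ[K] X) (hitilde : itilde = S ∘ₗ i) :
    𝒟 ∘ₗ 𝒟 = 0 ∧ D ∘ₗ itilde = itilde ∘ₗ 𝒟 := by
  -- nilpotency of h ∘ δ
  have key : ∀ k j, ∀ x ∈ F j, ((h * δ : Module.End K X) ^ k) x ∈ F (j + k) := by
    intro k
    induction k with
    | zero => intro j x hx; simpa using hx
    | succ k ih =>
      intro j x hx
      have hδx : δ x ∈ F (j + 1) := by rw [hδ]; exact hDF j x hx
      have hhx : (h * δ : Module.End K X) x ∈ F (j + 1) := hhF _ _ hδx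
      have := ih (j + 1) _ hhx
      rw [pow_succ, Module.End.mul_apply]
      convert this using 2
      omega
  have AN0 : ((h * δ : Module.End K X)) ^ N = 0 := by
    ext x
    have hx : x ∈ F 0 := by rw [hF0]; trivial
    have := key N 0 x hx
    rw [zero_add, hFN] at this
    simpa using this
  -- S as a geometric series in -(h*δ)
  have hS' : S = ∑ k ∈ Finset.range N, (-(h * δ) : Module.End K X) ^ k := by
    rw [hS]
    refine Finset.sum_congr rfl fun k _ => ?_
    rw [show (-(h * δ) : Module.End K X) = (-1 : K) • (h * δ) by rw [neg_one_smul],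
      smul_pow, Module.End.mul_eq_comp]
  have negAN0 : (-(h * δ) : Module.End K X) ^ N = 0 := by
    rw [neg_pow, AN0, mul_zero]
  have SR : (1 + h * δ : Module.End K X) * S = 1 := by
    have h1 := mul_geom_sum (-(h * δ) : Module.End K X) N
    rw [negAN0, ← hS'] at h1
    have h2 : -((1 + h * δ : Module.End K X) * S) = -1 := by
      rw [show -((1 + h * δ : Module.End K X) * S) = (-(h * δ) - 1) * S by noncomm_ring,
        h1]; noncomm_ring
    exact neg_injective h2
  have SL : S * (1 + h * δ : Module.End K X) = 1 := by
    have h1 := geom_sum_mul (-(h * δ) : Module.End K X) N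
    rw [negAN0, ← hS'] at h1
    have h2 : -(S * (1 + h * δ : Module.End K X)) = -1 := by
      rw [show -(S * (1 + h * δ : Module.End K X)) = S * (-(h * δ) - 1) by noncomm_ring,
        h1]; noncomm_ring
    exact neg_injective h2
  -- basic endomorphism identities
  set e : Module.End K X := i ∘ₗ p with he
  have Z2 : (h * d + d * h + e - 1 : Module.End K X) = 0 := by
    simp only [Module.End.mul_eq_comp]
    rw [show (h ∘ₗ d + d ∘ₗ h + e - 1 : Module.End K X)
        = (d ∘ₗ h + h ∘ₗ d) - (1 - e) by abel]
    rw [← hhom]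
    simp only [he]
    rw [show (1 : Module.End K X) = LinearMap.id from rfl]
    abel
  have Z3 : (d * δ + δ * d + δ * δ : Module.End K X) = 0 := by
    rw [hδ]
    have e1 : (d * (D - d) + (D - d) * d + (D - d) * (D - d) : Module.End K X)
        = D * D - d * d := by noncomm_ring
    rw [e1, Module.End.mul_eq_comp, Module.End.mul_eq_comp, hD2, hd2, sub_zero]
  -- the key identity
  have G : ((1 + h * δ) * ((d + δ) * S) : Module.End K X) = d + e * δ * S := by
    have expand : ((1 + h * δ) * ((d + δ) * S) : Module.End K X)
        = d + e * δ * S + d * ((1 + h * δ) * S - 1)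
          + h * (d * δ + δ * d + δ * δ) * S - (h * d + d * h + e - 1) * (δ * S) := by
      noncomm_ring
    rw [expand, SR, Z2, Z3, sub_self, mul_zero, zero_mul, mul_zero, zero_mul,
      add_zero, add_zero, sub_zero]
  have hDsum : (d + δ : Module.End K X) = D := by rw [hδ]; abel
  rw [hDsum] at G
  -- D * S = S * d + S * e * δ * S
  have G2 : (D * S : Module.End K X) = S * d + S * (e * δ * S) := by
    calc (D * S : Module.End K X) = S * (1 + h * δ) * (D * S) := by rw [SL, one_mul]
    _ = S * ((1 + h * δ) * (D * S)) := by rw [mul_assoc]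
    _ = S * (d + e * δ * S) := by rw [G]
    _ = S * d + S * (e * δ * S) := by rw [mul_add]
  -- chain map property
  have chain : D ∘ₗ itilde = itilde ∘ₗ 𝒟 := by
    rw [hitilde, h𝒟, he] at *
    have : (D * S : Module.End K X) ∘ₗ i = (S * d : Module.End K X) ∘ₗ i
        + (S * ((i ∘ₗ p) * δ * S) : Module.End K X) ∘ₗ i := by
      rw [G2, LinearMap.add_comp]
    simp only [Module.End.mul_eq_comp, LinearMap.comp_assoc] at this
    rw [hdi, LinearMap.comp_zero, zero_add] at this
    simp only [LinearMap.comp_assoc]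
    exact this
  refine ⟨?_, chain⟩
  -- 𝒟 ∘ 𝒟 = 0
  have hδD : (δ * D : Module.End K X) = -(d * D) := by
    rw [hδ]
    have : ((D - d) * D : Module.End K X) = D * D - d * D := by noncomm_ring
    rw [this, Module.End.mul_eq_comp D D, hD2, zero_sub]
  ext v
  have hc := LinearMap.ext_iff.mp chain v
  rw [hitilde] at hc
  simp only [h𝒟, LinearMap.comp_apply] at hc ⊢
  rw [LinearMap.zero_apply, ← hc]
  have h1 : δ (D (S (i v))) = -(d (D (S (i v)))) := by
    simpa using LinearMap.ext_iff.mp hδD (S (i v))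
  have h2 : p (d (D (S (i v)))) = 0 := by
    simpa using LinearMap.ext_iff.mp hpd (D (S (i v)))
  rw [hc, ← hc, h1, map_neg, h2, neg_zero]
end
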